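/- Let α = {B_1^{p_1},…,B_l^{p_l}} ∈ Π_n^• with min B_1 < … < min B_l, and define Φ from the principal upper filter U(α) = {π : π ≥ α} to the pointed partition poset Π^•_{{min B_1,…,min B_l}} by sending each pointed block A^q with A = B_{j_1}∪…∪B_{j_r} (j_1<…<j_r) and q = p_{j_s} to the pointed block {min B_{j_1},…,min B_{j_r}} pointed at min B_{j_s}, and sending π to the set of images of its pointed blocks. Then Φ is a poset isomorphism from U(α) onto Π^•_{{min B_1,…,min B_l}} which preserves the labeling λ_•: for every cover π ⋖ π′ in U(α), λ_•(Φ(π) ⋖ Φ(π′)) = λ_•(π ⋖ π′). -/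

import Mathlib

open Finset

open scoped BigOperators Classical

/-! ## Generic machinery for edge labelings of posets presented by cover relations -/

section Chains

variable {α : Type*} {L : Type*}

/-- The word of labels read along a list of poset elements. -/
def wordOf (lab : α → α → L) : List α → List L
  | x :: y :: rest => lab x y :: wordOf lab (y :: rest)
  | _ => []

/-- `c` is a saturated chain from `x` to `y` with respect to the cover relation `cov`;
in a graded poset these are exactly the maximal chains of the interval `[x, y]`. -/
def IsSatChain (cov : α → α → Prop) (x y : α) (c : List α) : Prop :=
  c.Chain' cov ∧ c.head? = some x ∧ c.getLast? = some y

/-- A word of labels is increasing if consecutive labels strictly increase. -/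
def IncWord (lt : L → L → Prop) (w : List L) : Prop := w.Chain' lt

/-- A word of labels is ascent-free if no consecutive pair of labels strictly increases. -/
def AscFree (lt : L → L → Prop) (w : List L) : Prop := w.Chain' fun a b => ¬ lt a b

/-- The partial order generated by a cover relation. -/
def leOf (cov : α → α → Prop) : α → α → Prop := Relation.ReflTransGen cov

/-- The strict order generated by a cover relation. -/
def ltOf (cov : α → α → Prop) (a b : α) : Prop := leOf cov a b ∧ a ≠ b

/-- An ER-labeling: every closed interval has a unique increasing maximal chain. -/
def IsERLabeling (cov : α → α → Prop) (lab : α → α → L) (lt : L → L → Prop) : Prop :=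
  ∀ x y, leOf cov x y → ∃! c, IsSatChain cov x y c ∧ IncWord lt (wordOf lab c)

/-- The rank two switching property: in every rank-two interval whose increasing chain
has word of labels `ab`, there is a unique chain with word of labels `ba`. -/
def RankTwoSwitch (cov : α → α → Prop) (lab : α → α → L) (lt : L → L → Prop) : Prop :=
  ∀ x y c a b, IsSatChain cov x y c → IncWord lt (wordOf lab c) → wordOf lab c = [a, b] →
    ∃! c', IsSatChain cov x y c' ∧ wordOf lab c' = [b, a]

/-- In every interval, distinct ascent-free maximal chains have distinct label words. -/
def AscFreeInj (cov : α → α → Prop) (lab : α → α → L) (lt : L → L → Prop) : Prop :=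
  ∀ x y c c', IsSatChain cov x y c → IsSatChain cov x y c' →
    AscFree lt (wordOf lab c) → AscFree lt (wordOf lab c') →
    wordOf lab c = wordOf lab c' → c = c'

/-- An EW-labeling. -/
def IsEWLabeling (cov : α → α → Prop) (lab : α → α → L) (lt : L → L → Prop) : Prop :=
  IsERLabeling cov lab lt ∧ RankTwoSwitch cov lab lt ∧ AscFreeInj cov lab lt

/-- An EL-labeling: every closed interval has a unique increasing maximal chain,
which lexicographically precedes every other maximal chain of the interval. -/
def IsELLabeling (cov : α → α → Prop) (lab : α → α → L) (lt : L → L → Prop) : Prop :=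
  ∀ x y, leOf cov x y →
    ∃ c, (IsSatChain cov x y c ∧ IncWord lt (wordOf lab c)) ∧
      ∀ c', IsSatChain cov x y c' → c' ≠ c →
        ¬ IncWord lt (wordOf lab c') ∧ List.Lex lt (wordOf lab c) (wordOf lab c')

end Chains

/-! ## Möbius functions and Whitney numbers -/

section Whitney

variable {α : Type*} {β : Type*}

/-- Auxiliary Möbius function computed with fuel; for an element of rank `k` of a
graded poset, fuel `k` computes the one-variable Möbius function `μ(0̂, ·)`. -/
noncomputable def muAux (ltr : α → α → Prop) (bot : α) : ℕ → α → ℤ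
  | 0, x => if x = bot then 1 else 0
  | k + 1, x => if x = bot then 1 else - ∑ᶠ (y : α) (_ : ltr y x), muAux ltr bot k y

/-- The one-variable Möbius function `μ(0̂, x)` of a graded poset presented by its
cover relation `cov`, minimum `bot` and rank function `rk`. -/
noncomputable def muBot (cov : α → α → Prop) (bot : α) (rk : α → ℕ) (x : α) : ℤ :=
  muAux (ltOf cov) bot (rk x) x

/-- The `k`-th Whitney number of the first kind. -/
noncomputable def whitney1 (cov : α → α → Prop) (bot : α) (rk : α → ℕ) (k : ℕ) : ℤ :=
  ∑ᶠ (x : α) (_ : rk x = k), muBot cov bot rk x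

/-- The `k`-th Whitney number of the second kind. -/
noncomputable def whitney2 (rk : α → ℕ) (k : ℕ) : ℕ :=
  Nat.card {x : α // rk x = k}

/-- Two graded posets are Whitney duals if their Whitney numbers of the first and second
kind are swapped (up to sign). -/
def IsWhitneyDual (covP : α → α → Prop) (botP : α) (rkP : α → ℕ)
    (covQ : β → β → Prop) (botQ : β) (rkQ : β → ℕ) : Prop :=
  ∀ k, (whitney1 covP botP rkP k).natAbs = whitney2 rkQ k ∧
       (whitney1 covQ botQ rkQ k).natAbs = whitney2 rkP k

/-- Two graded posets are Whitney twins if they have the same Whitney numbers of the first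
and of the second kind. -/
def IsWhitneyTwin (covP : α → α → Prop) (botP : α) (rkP : α → ℕ)
    (covQ : β → β → Prop) (botQ : β) (rkQ : β → ℕ) : Prop :=
  ∀ k, whitney1 covP botP rkP k = whitney1 covQ botQ rkQ k ∧ whitney2 rkP k = whitney2 rkQ k

/-- `(cov, bot, rk)` presents a graded poset with minimum `bot`. -/
def IsGradedPoset (cov : α → α → Prop) (bot : α) (rk : α → ℕ) : Prop :=
  (∀ x, leOf cov bot x) ∧ rk bot = 0 ∧ ∀ x y, cov x y → rk y = rk x + 1

/-- A graded poset has a Whitney dual. -/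
def HasWhitneyDual {γ : Type} (cov : γ → γ → Prop) (bot : γ) (rk : γ → ℕ) : Prop :=
  ∃ (β : Type) (_ : Finite β) (covQ : β → β → Prop) (botQ : β) (rkQ : β → ℕ),
    IsGradedPoset covQ botQ rkQ ∧ IsWhitneyDual cov bot rk covQ botQ rkQ

/-- Isomorphism of the posets generated by two cover relations. -/
def CovPosetIso (covP : α → α → Prop) (covQ : β → β → Prop) : Prop :=
  ∃ e : α ≃ β, ∀ x y, leOf covP x y ↔ leOf covQ (e x) (e y)

end Whitney

/-! ## The label posets `Λₙʷ` and `Λₙ•` (strict order relations)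

Labels are triples `(a, b, u)` with `a < b` in `[n]` and `u ∈ {0,1}` (encoded as `Bool`). -/

/-- The strict order of `Λₙʷ = Γ₁ ⊕ ⋯ ⊕ Γ_{n-1}` where `Γ_a` carries the product order
`(a,b)ᵘ ≤ (a,c)ᵛ ↔ b ≤ c ∧ u ≤ v`. -/
def ltLw (x y : ℕ × ℕ × Bool) : Prop :=
  x.1 < y.1 ∨ (x.1 = y.1 ∧ x.2.1 ≤ y.2.1 ∧ x.2.2 ≤ y.2.2 ∧ x.2 ≠ y.2)

/-- The strict order of `Λₙ• = A₁ ⊕ C₁ ⊕ ⋯ ⊕ A_{n-1} ⊕ C_{n-1}` where `A_a` is the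
antichain of the `(a,b)⁰` and `C_a` is the chain of the `(a,b)¹` ordered by `b`. -/
def ltLp (x y : ℕ × ℕ × Bool) : Prop :=
  x.1 < y.1 ∨ (x.1 = y.1 ∧
    ((x.2.2 = false ∧ y.2.2 = true) ∨ (x.2.2 = true ∧ y.2.2 = true ∧ x.2.1 < y.2.1)))

/-! ## Pointed and weighted partition posets -/

/-- The minimum of a finite set of naturals (`0` for the empty set). -/
def minB (B : Finset ℕ) : ℕ := B.min.untopD 0

/-- Pointed partitions of the ground set `A`: partitions of `A` into blocks, each block
carrying a distinguished (pointed) element.  A pointed block is a pair `(B, p)` with `p ∈ B`. -/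
abbrev PPart (A : Finset ℕ) : Type :=
  {π : Finset (Finset ℕ × ℕ) //
    (∀ b ∈ π, b.2 ∈ b.1) ∧
    (∀ b ∈ π, ∀ b' ∈ π, b ≠ b' → Disjoint b.1 b'.1) ∧
    π.biUnion Prod.fst = A}

/-- The cover relation of the pointed partition poset: merge two pointed blocks, the merged
block being pointed at the pointed element of one of the two. -/
def covPP {A : Finset ℕ} (π π' : PPart A) : Prop :=
  ∃ b1 ∈ π.1, ∃ b2 ∈ π.1, minB b1.1 < minB b2.1 ∧
    ∃ p : ℕ, (p = b1.2 ∨ p = b2.2) ∧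
      π'.1 = insert (b1.1 ∪ b2.1, p) ((π.1.erase b1).erase b2)

/-- The labeling `λ•` (as a bare label map): the cover `u`-merging blocks `A, B` with
`min A < min B` gets the label `(min A, min B, u)`, where `u = 1` exactly when the merged
block is pointed at the pointed element of `A`. -/
noncomputable def labPP {A : Finset ℕ} (π π' : PPart A) : ℕ × ℕ × Bool :=
  let olds := π.1 \ π'.1
  let mins := olds.image (fun b => minB b.1)
  (mins.min.untopD 0, mins.max.unbotD 0,
    if ∃ b ∈ olds, minB b.1 = mins.min.untopD 0 ∧ ∃ d ∈ π'.1 \ π.1, d.2 = b.2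
      then true else false)

/-- The minimum of the pointed partition poset: all blocks are pointed singletons. -/
def botPP (A : Finset ℕ) : PPart A :=
  ⟨A.image fun i => ({i}, i), by
    refine ⟨?_, ?_, ?_⟩
    · intro b hb
      obtain ⟨i, -, rfl⟩ := Finset.mem_image.1 hb
      exact Finset.mem_singleton_self i
    · intro b hb b' hb' hne
      obtain ⟨i, -, rfl⟩ := Finset.mem_image.1 hb
      obtain ⟨j, -, rfl⟩ := Finset.mem_image.1 hb'
      have hij : i ≠ j := fun h => hne (by rw [h])
      simp [Finset.disjoint_left, hij]
    · ext x
      simp⟩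

/-- The rank function of the pointed partition poset. -/
def rkPP {A : Finset ℕ} (π : PPart A) : ℕ := A.card - π.1.card

/-- Weighted partitions of the ground set `A`: partitions of `A` into blocks, each block `B`
carrying a weight `v` with `0 ≤ v ≤ |B| - 1`. -/
abbrev WPart (A : Finset ℕ) : Type :=
  {π : Finset (Finset ℕ × ℕ) //
    (∀ b ∈ π, b.2 < b.1.card) ∧
    (∀ b ∈ π, ∀ b' ∈ π, b ≠ b' → Disjoint b.1 b'.1) ∧
    π.biUnion Prod.fst = A}

/-- The cover relation of the weighted partition poset: merge blocks `A^v, B^w` into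
`(A ∪ B)^(v+w+u)` for some `u ∈ {0,1}`. -/
def covWP {A : Finset ℕ} (π π' : WPart A) : Prop :=
  ∃ b1 ∈ π.1, ∃ b2 ∈ π.1, minB b1.1 < minB b2.1 ∧ ∃ u : Bool,
    π'.1 = insert (b1.1 ∪ b2.1, b1.2 + b2.2 + (if u then 1 else 0)) ((π.1.erase b1).erase b2)

/-- The labeling `λ_w` (as a bare label map): the cover merging `A^v, B^w` with
`min A < min B` into `(A ∪ B)^(v+w+u)` gets the label `(min A, min B, u)`. -/
noncomputable def labWP {A : Finset ℕ} (π π' : WPart A) : ℕ × ℕ × Bool :=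
  let olds := π.1 \ π'.1
  let mins := olds.image (fun b => minB b.1)
  (mins.min.untopD 0, mins.max.unbotD 0,
    if (π'.1 \ π.1).sum Prod.snd = olds.sum Prod.snd + 1 then true else false)

/-- The minimum of the weighted partition poset: all blocks singletons of weight `0`. -/
def botWP (A : Finset ℕ) : WPart A :=
  ⟨A.image fun i => ({i}, 0), by
    refine ⟨?_, ?_, ?_⟩
    · intro b hb
      obtain ⟨i, -, rfl⟩ := Finset.mem_image.1 hb
      simp
    · intro b hb b' hb' hne
      obtain ⟨i, -, rfl⟩ := Finset.mem_image.1 hb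
      obtain ⟨j, -, rfl⟩ := Finset.mem_image.1 hb'
      have hij : i ≠ j := fun h => hne (by rw [h])
      simp [Finset.disjoint_left, hij]
    · ext x
      simp⟩

/-- The rank function of the weighted partition poset. -/
def rkWP {A : Finset ℕ} (π : WPart A) : ℕ := A.card - π.1.card
/-! ## Bicolored binary trees and Lyndon forests -/

/-- Planar binary trees with `ℕ`-labeled leaves and `Bool`-colored internal vertices
(`false` = color 0, `true` = color 1). -/
inductive BT : Type
  | leaf : ℕ → BT
  | node : Bool → BT → BT → BT
deriving DecidableEq

namespace BT

/-- The valency: the minimum leaf label of a tree. -/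
def nu : BT → ℕ
  | leaf a => a
  | node _ l r => min l.nu r.nu

/-- The set of leaf labels of a tree. -/
def leaves : BT → Finset ℕ
  | leaf a => {a}
  | node _ l r => l.leaves ∪ r.leaves

/-- The number of internal vertices of a tree. -/
def internals : BT → ℕ
  | leaf _ => 0
  | node _ l r => l.internals + r.internals + 1

/-- A tree is normalized if its leaf labels are distinct and every internal vertex has the
same valency as its left child. -/
def normalized : BT → Prop
  | leaf _ => True
  | node _ l r => l.normalized ∧ r.normalized ∧ Disjoint l.leaves r.leaves ∧ l.nu < r.nu

/-- The pointed Lyndon condition: at every internal vertex `v` with internal left child,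
`color (L v) ≥ color v`, and if `color (L v) = color v = 1` then `v` is a Lyndon vertex,
i.e. `ν (R (L v)) > ν (R v)`. -/
def pLyn : BT → Prop
  | leaf _ => True
  | node c l r => l.pLyn ∧ r.pLyn ∧
      (match l with
       | leaf _ => True
       | node c' _ r' => c ≤ c' ∧ ((c' = c ∧ c = true) → r.nu < r'.nu))

/-- The bicolored Lyndon condition: every internal vertex with internal left child is
Lyndon (`ν (R (L v)) > ν (R v)`) or satisfies `color (L v) > color v`. -/
def wLyn : BT → Prop
  | leaf _ => True
  | node c l r => l.wLyn ∧ r.wLyn ∧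
      (match l with
       | leaf _ => True
       | node c' _ r' => r.nu < r'.nu ∨ c < c')

/-- The pointed element of a bicolored tree: a `1`-colored vertex keeps the point of its
left subtree and a `0`-colored vertex keeps the point of its right subtree. -/
def ppt : BT → ℕ
  | leaf a => a
  | node c l r => if c then l.ppt else r.ppt

end BT

/-- `u`-merging of two pointed Lyndon trees: create a new root of color `u` with the two
trees as subtrees, then repeatedly slide the new vertex together with its right subtree
past its left child until the pointed Lyndon condition holds at the new vertex. -/
def mergeP (u : Bool) : BT → BT → BT
  | BT.leaf a, t2 => BT.node u (BT.leaf a) t2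
  | BT.node c a b, t2 =>
      if u ≤ c ∧ ((c = true ∧ u = true) → t2.nu < b.nu)
      then BT.node u (BT.node c a b) t2
      else BT.node c (mergeP u a t2) b

/-- `u`-merging of two bicolored Lyndon trees: create a new root of color `u` with the two
trees as subtrees, then repeatedly slide the new vertex together with its right subtree
past its left child until the bicolored Lyndon condition holds at the new vertex. -/
def mergeW (u : Bool) : BT → BT → BT
  | BT.leaf a, t2 => BT.node u (BT.leaf a) t2
  | BT.node c a b, t2 =>
      if t2.nu < b.nu ∨ u < c
      then BT.node u (BT.node c a b) t2
      else BT.node c (mergeW u a t2) b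

/-- A valid forest on the ground set `[n]`, each tree normalized and satisfying `P`, the
trees having pairwise disjoint leaf sets which together cover `[n] = {1, …, n}`. -/
def ForestValid (n : ℕ) (P : BT → Prop) (F : Finset BT) : Prop :=
  (∀ t ∈ F, t.normalized ∧ P t) ∧
  (∀ t ∈ F, ∀ t' ∈ F, t ≠ t' → Disjoint t.leaves t'.leaves) ∧
  F.biUnion BT.leaves = Finset.Icc 1 n

/-- The set of pointed Lyndon forests on `[n]`. -/
abbrev FLynP (n : ℕ) : Type := {F : Finset BT // ForestValid n BT.pLyn F}

/-- The set of bicolored Lyndon forests on `[n]`. -/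
abbrev FLynW (n : ℕ) : Type := {F : Finset BT // ForestValid n BT.wLyn F}

/-- The cover relation on forests: `u`-merge two of the trees (the one with smaller minimum
leaf label going to the left). -/
def covForest (merge : Bool → BT → BT → BT) (F F' : Finset BT) : Prop :=
  ∃ t1 ∈ F, ∃ t2 ∈ F, t1.nu < t2.nu ∧ ∃ u : Bool,
    F' = insert (merge u t1 t2) ((F.erase t1).erase t2)

/-- The cover relation of the poset of pointed Lyndon forests `FLyn_n^•`. -/
def covFP {n : ℕ} (F F' : FLynP n) : Prop := covForest mergeP F.1 F'.1

/-- The cover relation of the poset of bicolored Lyndon forests `FLyn_n^w`. -/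
def covFW {n : ℕ} (F F' : FLynW n) : Prop := covForest mergeW F.1 F'.1

/-- The forest of `n` isolated leaves. -/
def botForest (n : ℕ) : Finset BT := (Finset.Icc 1 n).image BT.leaf

theorem botForest_valid (n : ℕ) (P : BT → Prop) (hP : ∀ a, P (BT.leaf a)) :
    ForestValid n P (botForest n) := by
  refine ⟨?_, ?_, ?_⟩
  · intro t ht
    obtain ⟨i, -, rfl⟩ := Finset.mem_image.1 ht
    exact ⟨trivial, hP i⟩
  · intro t ht t' ht' hne
    obtain ⟨i, -, rfl⟩ := Finset.mem_image.1 ht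
    obtain ⟨j, -, rfl⟩ := Finset.mem_image.1 ht'
    have hij : i ≠ j := fun h => hne (by rw [h])
    simp only [BT.leaves]
    simp [Finset.disjoint_left, hij]
  · ext x
    simp [botForest, BT.leaves]

/-- The minimum of the poset of pointed Lyndon forests. -/
def botFP (n : ℕ) : FLynP n := ⟨botForest n, botForest_valid n _ fun _ => trivial⟩

/-- The minimum of the poset of bicolored Lyndon forests. -/
def botFW (n : ℕ) : FLynW n := ⟨botForest n, botForest_valid n _ fun _ => trivial⟩

/-- The rank of a forest: its total number of internal vertices. -/
def rkForest (F : Finset BT) : ℕ := F.sum BT.internals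

/-- The rank function of `FLyn_n^•`. -/
def rkFP {n : ℕ} (F : FLynP n) : ℕ := rkForest F.1

/-- The rank function of `FLyn_n^w`. -/
def rkFW {n : ℕ} (F : FLynW n) : ℕ := rkForest F.1

/-! ## The Whitney dual construction `R_λ(P)` -/

section RPoset

variable {α : Type*} {L : Type*}

/-- Swap the leftmost ascent of a word of labels. -/
noncomputable def swapFirstAscent (lt : L → L → Prop) : List L → List L
  | a :: b :: rest => if lt a b then b :: a :: rest else a :: swapFirstAscent lt (b :: rest)
  | w => w

/-- Sort a word of labels by repeatedly swapping its leftmost ascent until it is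
ascent-free. -/
noncomputable def sortWord (lt : L → L → Prop) (w : List L) : List L :=
  (swapFirstAscent lt)^[w.length * w.length] w

/-- The underlying set of the Whitney dual `R_λ(P)`: pairs `(x, w)` where `w` is the label
word of an ascent-free saturated chain from `0̂` to `x`. -/
abbrev RPoset (cov : α → α → Prop) (lab : α → α → L) (lt : L → L → Prop) (bot : α) : Type _ :=
  {q : α × List L //
    ∃ c, IsSatChain cov bot q.1 c ∧ AscFree lt (wordOf lab c) ∧ wordOf lab c = q.2}

/-- The cover relation of `R_λ(P)`: `(x, w) ⋖ (y, u)` iff `x ⋖ y` and `u` is obtained by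
sorting the label of `x ⋖ y` into `w`. -/
def covR (cov : α → α → Prop) (lab : α → α → L) (lt : L → L → Prop) (bot : α)
    (p q : RPoset cov lab lt bot) : Prop :=
  cov p.1.1 q.1.1 ∧ q.1.2 = sortWord lt (p.1.2 ++ [lab p.1.1 q.1.1])

end RPoset

/-! ## Reiner's poset of rooted spanning forests -/

/-- A rooted spanning forest on `[n]`, encoded by its parent function: `f i` is the parent
of the vertex `i` (`f i = i` for roots), vertices outside `[n]` being fixed, and every
vertex reaching a root after finitely many steps (acyclicity). -/
def SFvalid (n : ℕ) (f : ℕ → ℕ) : Prop :=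
  (∀ i ∈ Finset.Icc 1 n, f i ∈ Finset.Icc 1 n) ∧
  (∀ i, i ∉ Finset.Icc 1 n → f i = i) ∧
  (∀ i, ∃ k, f^[k + 1] i = f^[k] i)

/-- Reiner's poset `SF_n` of rooted spanning forests of the complete graph on `[n]`. -/
abbrev SF (n : ℕ) : Type := {f : ℕ → ℕ // SFvalid n f}

/-- The cover relation of `SF_n`: add an edge between the roots of two trees, one of the
two roots becoming the root of the merged tree. -/
def covSF {n : ℕ} (f g : SF n) : Prop :=
  ∃ r1 ∈ Finset.Icc 1 n, ∃ r2 ∈ Finset.Icc 1 n, r1 ≠ r2 ∧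
    f.1 r1 = r1 ∧ f.1 r2 = r2 ∧
    (g.1 = Function.update f.1 r1 r2 ∨ g.1 = Function.update f.1 r2 r1)

/-- The rank of a rooted spanning forest: its number of edges. -/
def rkSF {n : ℕ} (f : SF n) : ℕ := ((Finset.Icc 1 n).filter fun i => f.1 i ≠ i).card
/-! ## Further constructions used in particular statements -/

/-- The map `Φ` on underlying finsets: a pointed block `(B, q)` of a pointed partition
above `α` is sent to the set of minima of the `α`-blocks contained in `B`, pointed at the
minimum of the `α`-block containing `q`. -/
noncomputable def PhiMap (af : Finset (Finset ℕ × ℕ)) (pf : Finset (Finset ℕ × ℕ)) :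
    Finset (Finset ℕ × ℕ) :=
  pf.image fun b =>
    ((af.filter fun c => c.1 ⊆ b.1).image fun c => minB c.1,
     ((af.filter fun c => b.2 ∈ c.1).image fun c => minB c.1).min.untopD 0)

/-- The expected word of labels of the unique increasing maximal chain of the interval
`[0̂, [n]^p]` of the pointed partition poset:
`(1,2)¹ ⋯ (1,n)¹` if `p = 1`, and `(1,p)⁰ (1,2)¹ ⋯ (1,p-1)¹ (1,p+1)¹ ⋯ (1,n)¹` otherwise. -/
def expectedWordP (n p : ℕ) : List (ℕ × ℕ × Bool) :=
  let base := (List.range (n - 1)).map fun i => ((1 : ℕ), i + 2, true)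
  if p = 1 then base else ((1 : ℕ), p, false) :: base.erase (1, p, true)

/-- Merge two words of labels, each with non-increasing first components, into a single
word with non-increasing first components. -/
def mergeByNu : List (ℕ × ℕ × Bool) → List (ℕ × ℕ × Bool) → List (ℕ × ℕ × Bool)
  | [], ys => ys
  | xs, [] => xs
  | x :: xs, y :: ys =>
      if y.1 ≤ x.1 then x :: mergeByNu xs (y :: ys) else y :: mergeByNu (x :: xs) ys
termination_by xs ys => xs.length + ys.length

/-- The word of labels of a tree read along the reverse-minimal linear extension of its
internal vertices: the internal vertex `v` contributes `(ν (L v), ν (R v), color v)`, the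
vertices being listed with non-increasing valencies (descendants first among equal
valencies). -/
def BT.rmword : BT → List (ℕ × ℕ × Bool)
  | BT.leaf _ => []
  | BT.node c l r => mergeByNu l.rmword r.rmword ++ [(l.nu, r.nu, c)]

/-- The word of labels of the saturated chain `c(F)` associated to a forest `F`, read along
the reverse-minimal linear extension of the internal vertices of `F`. -/
noncomputable def forestWord (F : Finset BT) : List (ℕ × ℕ × Bool) :=
  (F.toList.map BT.rmword).foldr mergeByNu []

/-- `TLyn_{n,p}^•`: pointed Lyndon trees on `[n]` whose associated chain ends at `[n]^p`,
i.e. whose tracked pointed element is `p`. -/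
abbrev TLynBullet (n p : ℕ) : Type :=
  {T : BT // T.normalized ∧ T.pLyn ∧ T.leaves = Finset.Icc 1 n ∧ T.ppt = p}

/-- The labeling `λ̃` of `Πₙ•` proposed by Bellier-Millès, Delcroix-Oger and Hoffbeck:
the cover `u`-merging blocks with minima `a < b` in a pointed partition `π` with `|π|`
blocks is labeled `(b, a + n - |π|)` if `u = 0` and `(b, b + n - |π|)` if `u = 1`. -/
noncomputable def labT (n : ℕ) {A : Finset ℕ} (π π' : PPart A) : ℕ × ℕ :=
  let olds := π.1 \ π'.1
  let mins := olds.image fun b => minB b.1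
  let a := mins.min.untopD 0
  let b := mins.max.unbotD 0
  if ∃ c ∈ olds, minB c.1 = a ∧ ∃ d ∈ π'.1 \ π.1, d.2 = c.2
  then (b, b + n - π.1.card)
  else (b, a + n - π.1.card)

/-- The (strict) lexicographic order on `ℕ × ℕ`. -/
def ltT (x y : ℕ × ℕ) : Prop := x.1 < y.1 ∨ (x.1 = y.1 ∧ x.2 < y.2)

/-!
A pointed partition lies above `α` exactly when every block of `α` sits inside one of its
blocks and each of its blocks is pointed at the point of an `α`-block it contains
(`IsCoarsening`): such partitions are reached from `α` by repeatedly merging two `α`-blocks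
lying in a common block, keeping the point that block needs. A coarsening is determined by
the grouping of the `α`-blocks and the choice of the pointed one, so replacing each `α`-block
by its minimum is a bijection onto pointed partitions of the set of minima, whose inverse
expands every minimum back into its `α`-block. Both maps preserve minima of blocks and
commute with merging two blocks, hence carry covers to covers; and `λ•` only reads the two
minima and which of the two points survives, so the labels agree.
-/

lemma minB_eq_min' {B : Finset ℕ} (h : B.Nonempty) : minB B = B.min' h := by
  rw [minB, ← Finset.coe_min' h]
  rfl

lemma minB_mem {B : Finset ℕ} (h : B.Nonempty) : minB B ∈ B := by
  rw [minB_eq_min' h]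
  exact B.min'_mem h

lemma minB_le {B : Finset ℕ} {y : ℕ} (hy : y ∈ B) : minB B ≤ y := by
  rw [minB_eq_min' ⟨y, hy⟩]
  exact B.min'_le y hy

lemma minB_eq_of_forall_le {B : Finset ℕ} {y : ℕ} (hy : y ∈ B) (h : ∀ x ∈ B, y ≤ x) :
    minB B = y :=
  le_antisymm (minB_le hy) (by rw [minB_eq_min' ⟨y, hy⟩]; exact B.le_min' _ y h)

lemma minB_pair {x y : ℕ} (h : x ≤ y) : minB {x, y} = x :=
  minB_eq_of_forall_le (mem_insert_self x _) (by simpa using h)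

lemma max_pair_unbotD {x y : ℕ} (h : x ≤ y) : ({x, y} : Finset ℕ).max.unbotD 0 = y := by
  rw [Finset.max_insert, Finset.max_singleton, max_eq_right (WithBot.coe_le_coe.2 h)]
  rfl

/-- `covPP π π'` unfolds to `π'.1 = mergeBlocks π.1 b₁ b₂ p` for suitable `b₁ b₂ p`. -/
def mergeBlocks (s : Finset (Finset ℕ × ℕ)) (b₁ b₂ : Finset ℕ × ℕ) (p : ℕ) :
    Finset (Finset ℕ × ℕ) :=
  insert (b₁.1 ∪ b₂.1, p) ((s.erase b₁).erase b₂)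

lemma mem_mergeBlocks {s : Finset (Finset ℕ × ℕ)} {b₁ b₂ d : Finset ℕ × ℕ} {p : ℕ} :
    d ∈ mergeBlocks s b₁ b₂ p ↔ d = (b₁.1 ∪ b₂.1, p) ∨ (d ∈ s ∧ d ≠ b₁ ∧ d ≠ b₂) := by
  simp only [mergeBlocks, mem_insert, mem_erase]
  tauto

lemma mergeBlocks_comm (s : Finset (Finset ℕ × ℕ)) (b₁ b₂ : Finset ℕ × ℕ) (p : ℕ) :
    mergeBlocks s b₁ b₂ p = mergeBlocks s b₂ b₁ p := by
  rw [mergeBlocks, mergeBlocks, union_comm, erase_right_comm]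

lemma image_mergeBlocks {s : Finset (Finset ℕ × ℕ)} {f : Finset ℕ × ℕ → Finset ℕ × ℕ}
    (hf : Set.InjOn f s) {b₁ b₂ : Finset ℕ × ℕ} (hb₁ : b₁ ∈ s) (hb₂ : b₂ ∈ s) {p q : ℕ}
    (hmerge : f (b₁.1 ∪ b₂.1, p) = ((f b₁).1 ∪ (f b₂).1, q)) :
    (mergeBlocks s b₁ b₂ p).image f = mergeBlocks (s.image f) (f b₁) (f b₂) q := by
  ext d
  simp only [mem_image, mem_mergeBlocks]
  constructor
  · rintro ⟨b, rfl | ⟨hb, hb1, hb2⟩, rfl⟩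
    · exact Or.inl hmerge
    · exact Or.inr ⟨⟨b, hb, rfl⟩, fun h => hb1 (hf hb hb₁ h), fun h => hb2 (hf hb hb₂ h)⟩
  · rintro (rfl | ⟨⟨b, hb, rfl⟩, hb1, hb2⟩)
    · exact ⟨_, Or.inl rfl, hmerge⟩
    · exact ⟨b, Or.inr ⟨hb, fun h => hb1 (h ▸ rfl), fun h => hb2 (h ▸ rfl)⟩, rfl⟩

namespace PPart

variable {A : Finset ℕ} (π : PPart A)

lemma snd_mem {b : Finset ℕ × ℕ} (hb : b ∈ π.1) : b.2 ∈ b.1 := π.2.1 b hb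

lemma fst_nonempty {b : Finset ℕ × ℕ} (hb : b ∈ π.1) : b.1.Nonempty := ⟨b.2, π.snd_mem hb⟩

lemma fst_subset {b : Finset ℕ × ℕ} (hb : b ∈ π.1) : b.1 ⊆ A :=
  π.2.2.2 ▸ subset_biUnion_of_mem Prod.fst hb

lemma exists_mem_fst {x : ℕ} (hx : x ∈ A) : ∃ b ∈ π.1, x ∈ b.1 := by
  rw [← π.2.2.2] at hx
  simpa using hx

lemma eq_of_mem_of_mem {b b' : Finset ℕ × ℕ} (hb : b ∈ π.1) (hb' : b' ∈ π.1) {x : ℕ}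
    (hx : x ∈ b.1) (hx' : x ∈ b'.1) : b = b' := by
  by_contra hne
  exact disjoint_left.mp (π.2.2.1 b hb b' hb' hne) hx hx'

lemma eq_of_minB_eq {b b' : Finset ℕ × ℕ} (hb : b ∈ π.1) (hb' : b' ∈ π.1)
    (h : minB b.1 = minB b'.1) : b = b' :=
  π.eq_of_mem_of_mem hb hb' (minB_mem (π.fst_nonempty hb)) (h ▸ minB_mem (π.fst_nonempty hb'))

lemma eq_of_snd_eq {b b' : Finset ℕ × ℕ} (hb : b ∈ π.1) (hb' : b' ∈ π.1) (h : b.2 = b'.2) :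
    b = b' :=
  π.eq_of_mem_of_mem hb hb' (π.snd_mem hb) (h ▸ π.snd_mem hb')

lemma eq_of_subset {π' : PPart A} (h : π.1 ⊆ π'.1) : π = π' := by
  refine Subtype.ext (h.antisymm fun c hc => ?_)
  obtain ⟨b, hb, hcb⟩ := π.exists_mem_fst (π'.fst_subset hc (π'.snd_mem hc))
  exact π'.eq_of_mem_of_mem (h hb) hc hcb (π'.snd_mem hc) ▸ hb

lemma filter_mem_fst_eq {c : Finset ℕ × ℕ} (hc : c ∈ π.1) {x : ℕ} (hx : x ∈ c.1) :
    π.1.filter (fun b => x ∈ b.1) = {c} := by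
  ext b
  simp only [mem_filter, mem_singleton]
  exact ⟨fun ⟨hb, hxb⟩ => π.eq_of_mem_of_mem hb hc hxb hx, by rintro rfl; exact ⟨hc, hx⟩⟩

lemma filter_minB_eq {c : Finset ℕ × ℕ} (hc : c ∈ π.1) :
    π.1.filter (fun b => minB b.1 = minB c.1) = {c} := by
  ext b
  simp only [mem_filter, mem_singleton]
  exact ⟨fun ⟨hb, h⟩ => π.eq_of_minB_eq hb hc h, by rintro rfl; exact ⟨hc, rfl⟩⟩

lemma union_notMem {b₁ b₂ : Finset ℕ × ℕ} (hb₁ : b₁ ∈ π.1) (hb₂ : b₂ ∈ π.1) (hne : b₁ ≠ b₂)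
    (p : ℕ) : (b₁.1 ∪ b₂.1, p) ∉ π.1 := by
  intro hm
  have h₁ := π.eq_of_mem_of_mem hm hb₁ (mem_union_left _ (π.snd_mem hb₁)) (π.snd_mem hb₁)
  have h₂ := π.eq_of_mem_of_mem hm hb₂ (mem_union_right _ (π.snd_mem hb₂)) (π.snd_mem hb₂)
  exact hne (h₁.symm.trans h₂)

def merge {b₁ b₂ : Finset ℕ × ℕ} (hb₁ : b₁ ∈ π.1) (hb₂ : b₂ ∈ π.1) : PPart A := by
  refine ⟨mergeBlocks π.1 b₁ b₂ b₁.2, fun d hd => ?_, fun d hd d' hd' hne => ?_, ?_⟩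
  · rcases mem_mergeBlocks.1 hd with rfl | ⟨hd, -, -⟩
    · exact mem_union_left _ (π.snd_mem hb₁)
    · exact π.snd_mem hd
  · have hdisj : ∀ e ∈ π.1, e ≠ b₁ → e ≠ b₂ → Disjoint (b₁.1 ∪ b₂.1) e.1 := fun e he h₁ h₂ =>
      disjoint_union_left.2 ⟨π.2.2.1 _ hb₁ _ he (Ne.symm h₁), π.2.2.1 _ hb₂ _ he (Ne.symm h₂)⟩
    rcases mem_mergeBlocks.1 hd with rfl | ⟨hd, hd₁, hd₂⟩ <;>
      rcases mem_mergeBlocks.1 hd' with rfl | ⟨hd', hd₁', hd₂'⟩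
    · exact absurd rfl hne
    · exact hdisj d' hd' hd₁' hd₂'
    · exact (hdisj d hd hd₁ hd₂).symm
    · exact π.2.2.1 d hd d' hd' hne
  · ext x
    simp only [mem_biUnion, mem_mergeBlocks]
    constructor
    · rintro ⟨d, rfl | ⟨hd, -, -⟩, hx⟩
      · rcases mem_union.1 hx with hx | hx
        exacts [π.fst_subset hb₁ hx, π.fst_subset hb₂ hx]
      · exact π.fst_subset hd hx
    · intro hx
      obtain ⟨b, hb, hxb⟩ := π.exists_mem_fst hx
      by_cases h : b = b₁ ∨ b = b₂
      · refine ⟨_, Or.inl rfl, ?_⟩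
        rcases h with rfl | rfl
        exacts [mem_union_left _ hxb, mem_union_right _ hxb]
      · push Not at h
        exact ⟨b, Or.inr ⟨hb, h⟩, hxb⟩

lemma covPP_merge {b₁ b₂ : Finset ℕ × ℕ} (hb₁ : b₁ ∈ π.1) (hb₂ : b₂ ∈ π.1) (hne : b₁ ≠ b₂) :
    covPP π (π.merge hb₁ hb₂) := by
  rcases lt_or_gt_of_ne fun h => hne (π.eq_of_minB_eq hb₁ hb₂ h) with hlt | hlt
  · exact ⟨b₁, hb₁, b₂, hb₂, hlt, b₁.2, Or.inl rfl, rfl⟩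
  · exact ⟨b₂, hb₂, b₁, hb₁, hlt, b₁.2, Or.inr rfl, mergeBlocks_comm _ _ _ _⟩

end PPart

section Covers

variable {A : Finset ℕ}

lemma card_lt_of_covPP {π π' : PPart A} (h : covPP π π') : π'.1.card < π.1.card := by
  obtain ⟨b₁, hb₁, b₂, hb₂, hlt, p, -, heq⟩ := h
  have hne : b₁ ≠ b₂ := fun h => hlt.ne (congrArg (minB ·.1) h)
  rw [heq, card_insert_of_notMem fun h => π.union_notMem hb₁ hb₂ hne p
      (mem_of_mem_erase (mem_of_mem_erase h)),
    card_erase_of_mem (mem_erase.2 ⟨hne.symm, hb₂⟩), card_erase_of_mem hb₁]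
  have : 2 ≤ π.1.card := by
    simpa [card_pair hne] using card_le_card (insert_subset hb₁ (singleton_subset_iff.2 hb₂))
  omega

lemma labPP_of_eq_mergeBlocks {π π' : PPart A} {b₁ b₂ : Finset ℕ × ℕ} {p : ℕ}
    (hb₁ : b₁ ∈ π.1) (hb₂ : b₂ ∈ π.1) (hlt : minB b₁.1 < minB b₂.1)
    (heq : π'.1 = mergeBlocks π.1 b₁ b₂ p) :
    labPP π π' = (minB b₁.1, minB b₂.1, if p = b₁.2 then true else false) := by
  have hne : b₁ ≠ b₂ := fun h => hlt.ne (congrArg (minB ·.1) h)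
  have hnew : π'.1 \ π.1 = {(b₁.1 ∪ b₂.1, p)} := by
    ext d
    simp only [mem_sdiff, heq, mem_mergeBlocks, mem_singleton]
    constructor
    · rintro ⟨rfl | ⟨hd, -⟩, hd'⟩
      exacts [rfl, absurd hd hd']
    · rintro rfl
      exact ⟨Or.inl rfl, π.union_notMem hb₁ hb₂ hne p⟩
  have hold : π.1 \ π'.1 = {b₁, b₂} := by
    ext d
    simp only [mem_sdiff, heq, mem_mergeBlocks, mem_insert, mem_singleton]
    constructor
    · rintro ⟨hd, hd'⟩
      by_contra h
      push Not at h
      exact hd' (Or.inr ⟨hd, h⟩)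
    · rintro (rfl | rfl) <;> refine ⟨‹_›, ?_⟩ <;> rintro (h | ⟨-, h₁, h₂⟩)
      exacts [π.union_notMem hb₁ hb₂ hne p (h ▸ hb₁), h₁ rfl,
        π.union_notMem hb₁ hb₂ hne p (h ▸ hb₂), h₂ rfl]
  have hpoint : (∃ b ∈ ({b₁, b₂} : Finset _), minB b.1 = minB b₁.1 ∧
      ∃ d ∈ ({(b₁.1 ∪ b₂.1, p)} : Finset _), d.2 = b.2) ↔ p = b₁.2 := by
    simp only [mem_insert, mem_singleton, exists_eq_left, exists_eq_or_imp, true_and,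
      hlt.ne', false_and, or_false]
  simp only [labPP, hold, hnew, image_insert, image_singleton]
  rw [← minB, minB_pair hlt.le, max_pair_unbotD hlt.le, if_congr hpoint rfl rfl]

theorem covPP_image {B : Finset ℕ} {π π' : PPart A} {ρ ρ' : PPart B}
    (f : Finset ℕ × ℕ → Finset ℕ × ℕ) (hρ : ρ.1 = π.1.image f) (hρ' : ρ'.1 = π'.1.image f)
    (hinj : Set.InjOn f π.1) (hmin : ∀ b ∈ π.1, minB (f b).1 = minB b.1)
    (hunion : ∀ b₁ ∈ π.1, ∀ b₂ ∈ π.1, ∀ x, (f (b₁.1 ∪ b₂.1, x)).1 = (f b₁).1 ∪ (f b₂).1)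
    (hsnd : ∀ S T x, (f (S, x)).2 = (f (T, x)).2) (h : covPP π π') :
    covPP ρ ρ' ∧ labPP ρ ρ' = labPP π π' := by
  obtain ⟨b₁, hb₁, b₂, hb₂, hlt, p, hp, heq : π'.1 = mergeBlocks π.1 b₁ b₂ p⟩ := h
  have hne : b₁ ≠ b₂ := fun h => hlt.ne (congrArg (minB ·.1) h)
  set q := (f (b₁.1 ∪ b₂.1, p)).2
  have hq : ∀ b : Finset ℕ × ℕ, p = b.2 → q = (f b).2 := by
    rintro b rfl
    exact hsnd _ _ _
  have hmem₁ : f b₁ ∈ ρ.1 := hρ ▸ mem_image_of_mem f hb₁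
  have hmem₂ : f b₂ ∈ ρ.1 := hρ ▸ mem_image_of_mem f hb₂
  have hlt' : minB (f b₁).1 < minB (f b₂).1 := by rwa [hmin b₁ hb₁, hmin b₂ hb₂]
  have heq' : ρ'.1 = mergeBlocks ρ.1 (f b₁) (f b₂) q := by
    rw [hρ', heq, hρ, image_mergeBlocks hinj hb₁ hb₂ (Prod.ext (hunion b₁ hb₁ b₂ hb₂ p) rfl)]
  have hpoint : q = (f b₁).2 ↔ p = b₁.2 := by
    refine ⟨fun h => hp.resolve_right fun hp₂ => hne (hinj hb₁ hb₂ ?_), hq b₁⟩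
    exact ρ.eq_of_snd_eq hmem₁ hmem₂ (h.symm.trans (hq b₂ hp₂))
  refine ⟨⟨f b₁, hmem₁, f b₂, hmem₂, hlt', q, hp.imp (hq b₁) (hq b₂), heq'⟩, ?_⟩
  rw [labPP_of_eq_mergeBlocks hmem₁ hmem₂ hlt' heq', labPP_of_eq_mergeBlocks hb₁ hb₂ hlt heq,
    hmin b₁ hb₁, hmin b₂ hb₂, if_congr hpoint rfl rfl]

end Covers

section Coarsening

variable {A : Finset ℕ}

def IsCoarsening (a π : PPart A) : Prop :=
  (∀ c ∈ a.1, ∃ b ∈ π.1, c.1 ⊆ b.1) ∧ ∀ b ∈ π.1, ∃ c ∈ a.1, c.1 ⊆ b.1 ∧ b.2 = c.2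

namespace IsCoarsening

variable {a π : PPart A}

lemma refl (a : PPart A) : IsCoarsening a a :=
  ⟨fun c hc => ⟨c, hc, subset_rfl⟩, fun b hb => ⟨b, hb, subset_rfl, rfl⟩⟩

lemma subset_of_mem (h : IsCoarsening a π) {c b : Finset ℕ × ℕ} (hc : c ∈ a.1) (hb : b ∈ π.1)
    {x : ℕ} (hxc : x ∈ c.1) (hxb : x ∈ b.1) : c.1 ⊆ b.1 := by
  obtain ⟨b', hb', hcb'⟩ := h.1 c hc
  rwa [π.eq_of_mem_of_mem hb' hb (hcb' hxc) hxb] at hcb'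

lemma trans_covPP {π' : PPart A} (h : IsCoarsening a π) (hcov : covPP π π') :
    IsCoarsening a π' := by
  obtain ⟨b₁, hb₁, b₂, hb₂, -, p, hp, heq : π'.1 = mergeBlocks π.1 b₁ b₂ p⟩ := hcov
  constructor
  · intro c hc
    obtain ⟨b, hb, hcb⟩ := h.1 c hc
    by_cases hb' : b = b₁ ∨ b = b₂
    · refine ⟨_, heq ▸ mem_mergeBlocks.2 (Or.inl rfl), hcb.trans ?_⟩
      rcases hb' with rfl | rfl
      exacts [subset_union_left, subset_union_right]
    · push Not at hb'
      exact ⟨b, heq ▸ mem_mergeBlocks.2 (Or.inr ⟨hb, hb'⟩), hcb⟩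
  · intro b hb
    rcases mem_mergeBlocks.1 (heq ▸ hb) with rfl | ⟨hb, -, -⟩
    · rcases hp with rfl | rfl
      · obtain ⟨c, hc, hcb, hpt⟩ := h.2 b₁ hb₁
        exact ⟨c, hc, hcb.trans subset_union_left, hpt⟩
      · obtain ⟨c, hc, hcb, hpt⟩ := h.2 b₂ hb₂
        exact ⟨c, hc, hcb.trans subset_union_right, hpt⟩
    · exact h.2 b hb

lemma trans_leOf {π' : PPart A} (h : IsCoarsening a π) (hle : leOf covPP π π') :
    IsCoarsening a π' := by
  induction hle with
  | refl => exact h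
  | tail _ hcov ih => exact ih.trans_covPP hcov

lemma of_leOf (h : leOf covPP a π) : IsCoarsening a π := (refl a).trans_leOf h

lemma exists_pair_of_ne (h : IsCoarsening a π) (hne : π ≠ a) :
    ∃ b ∈ π.1, ∃ c₁ ∈ a.1, ∃ c₂ ∈ a.1, c₁ ≠ c₂ ∧ c₁.1 ⊆ b.1 ∧ c₂.1 ⊆ b.1 ∧ b.2 = c₁.2 := by
  by_contra! hsingle
  refine hne (π.eq_of_subset fun b hb => ?_)
  obtain ⟨c, hc, hcb, hpt⟩ := h.2 b hb
  suffices b.1 = c.1 from (Prod.ext this hpt : b = c) ▸ hc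
  refine Subset.antisymm (fun x hx => ?_) hcb
  obtain ⟨c', hc', hxc'⟩ := a.exists_mem_fst (π.fst_subset hb hx)
  by_contra hxc
  exact hsingle b hb c hc c' hc' (fun h => hxc (h ▸ hxc')) hcb
    (h.subset_of_mem hc' hb hxc' hx) hpt

lemma merge (h : IsCoarsening a π) {b c₁ c₂ : Finset ℕ × ℕ} (hb : b ∈ π.1) (hc₁ : c₁ ∈ a.1)
    (hc₂ : c₂ ∈ a.1) (hc₁b : c₁.1 ⊆ b.1) (hc₂b : c₂.1 ⊆ b.1) (hpt : b.2 = c₁.2) :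
    IsCoarsening (a.merge hc₁ hc₂) π := by
  constructor
  · intro c hc
    rcases mem_mergeBlocks.1 hc with rfl | ⟨hc, -, -⟩
    exacts [⟨b, hb, union_subset hc₁b hc₂b⟩, h.1 c hc]
  · intro b' hb'
    by_cases hbb' : b' = b
    · exact ⟨_, mem_mergeBlocks.2 (Or.inl rfl), hbb' ▸ union_subset hc₁b hc₂b, hbb' ▸ hpt⟩
    obtain ⟨c, hc, hcb', hpt'⟩ := h.2 b' hb'
    have hc_ne : ∀ c' ∈ a.1, c'.1 ⊆ b.1 → c ≠ c' := by
      rintro c' - hc'b rfl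
      exact hbb' (π.eq_of_mem_of_mem hb' hb (hcb' (a.snd_mem hc)) (hc'b (a.snd_mem hc)))
    exact ⟨c, mem_mergeBlocks.2 (Or.inr ⟨hc, hc_ne c₁ hc₁ hc₁b, hc_ne c₂ hc₂ hc₂b⟩), hcb', hpt'⟩

lemma exists_covPP_of_ne (h : IsCoarsening a π) (hne : π ≠ a) :
    ∃ a', covPP a a' ∧ IsCoarsening a' π := by
  obtain ⟨b, hb, c₁, hc₁, c₂, hc₂, hc, hc₁b, hc₂b, hpt⟩ := h.exists_pair_of_ne hne
  exact ⟨_, a.covPP_merge hc₁ hc₂ hc, h.merge hb hc₁ hc₂ hc₁b hc₂b hpt⟩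

end IsCoarsening

theorem leOf_of_isCoarsening {a π : PPart A} (h : IsCoarsening a π) : leOf covPP a π := by
  rcases eq_or_ne π a with rfl | hne
  · exact Relation.ReflTransGen.refl
  obtain ⟨a', hcov, h'⟩ := h.exists_covPP_of_ne hne
  exact Relation.ReflTransGen.head hcov (leOf_of_isCoarsening h')
termination_by a.1.card
decreasing_by exact card_lt_of_covPP hcov

end Coarsening

namespace PPart

variable {A : Finset ℕ} (a : PPart A)

abbrev mins : Finset ℕ := a.1.image fun c => minB c.1

lemma mem_mins {m : ℕ} : m ∈ a.mins ↔ ∃ c ∈ a.1, minB c.1 = m := mem_image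

/-- `Φ` on a single block; the `min.untopD` picks the minimum of the unique block of `a`
containing `b.2`. -/
noncomputable def phiBlock (b : Finset ℕ × ℕ) : Finset ℕ × ℕ :=
  ((a.1.filter fun c => c.1 ⊆ b.1).image fun c => minB c.1,
   ((a.1.filter fun c => b.2 ∈ c.1).image fun c => minB c.1).min.untopD 0)

/-- `Φ⁻¹` on a single block; the `min.untopD` picks the point of the unique block of `a` with
minimum `s.2`. -/
noncomputable def psiBlock (s : Finset ℕ × ℕ) : Finset ℕ × ℕ :=
  ((a.1.filter fun c => minB c.1 ∈ s.1).biUnion Prod.fst,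
   ((a.1.filter fun c => minB c.1 = s.2).image Prod.snd).min.untopD 0)

variable {a}

lemma mem_phiBlock_fst {b : Finset ℕ × ℕ} {m : ℕ} :
    m ∈ (a.phiBlock b).1 ↔ ∃ c ∈ a.1, c.1 ⊆ b.1 ∧ minB c.1 = m := by
  simp [phiBlock, and_assoc]

lemma phiBlock_snd {b c : Finset ℕ × ℕ} (hc : c ∈ a.1) (hb : b.2 ∈ c.1) :
    (a.phiBlock b).2 = minB c.1 := by
  simp only [phiBlock, a.filter_mem_fst_eq hc hb, image_singleton, min_singleton]
  rfl

lemma mem_psiBlock_fst {s : Finset ℕ × ℕ} {x : ℕ} :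
    x ∈ (a.psiBlock s).1 ↔ ∃ c ∈ a.1, minB c.1 ∈ s.1 ∧ x ∈ c.1 := by
  simp [psiBlock, and_assoc]

lemma psiBlock_snd {s c : Finset ℕ × ℕ} (hc : c ∈ a.1) (hs : minB c.1 = s.2) :
    (a.psiBlock s).2 = c.2 := by
  simp only [psiBlock, ← hs, a.filter_minB_eq hc, image_singleton, min_singleton]
  rfl

lemma psiBlock_union_fst (s t : Finset ℕ × ℕ) (x : ℕ) :
    (a.psiBlock (s.1 ∪ t.1, x)).1 = (a.psiBlock s).1 ∪ (a.psiBlock t).1 := by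
  ext y
  simp only [mem_union, mem_psiBlock_fst, or_and_right, and_or_left, exists_or]

variable (ρ : PPart a.mins)

lemma minB_psiBlock {s : Finset ℕ × ℕ} (hs : s ∈ ρ.1) : minB (a.psiBlock s).1 = minB s.1 := by
  have hmin := minB_mem (ρ.fst_nonempty hs)
  obtain ⟨c, hc, hcm⟩ := a.mem_mins.1 (ρ.fst_subset hs hmin)
  refine minB_eq_of_forall_le (mem_psiBlock_fst.2 ⟨c, hc, hcm ▸ hmin, ?_⟩) ?_
  · exact hcm ▸ minB_mem (a.fst_nonempty hc)
  · intro x hx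
    obtain ⟨c', -, hc's, hxc'⟩ := mem_psiBlock_fst.1 hx
    exact (minB_le hc's).trans (minB_le hxc')

lemma phiBlock_psiBlock {s : Finset ℕ × ℕ} (hs : s ∈ ρ.1) : a.phiBlock (a.psiBlock s) = s := by
  obtain ⟨c, hc, hcs⟩ := a.mem_mins.1 (ρ.fst_subset hs (ρ.snd_mem hs))
  refine Prod.ext (ext fun m => ?_) ?_
  · rw [mem_phiBlock_fst]
    constructor
    · rintro ⟨c', hc', hc'sub, rfl⟩
      have hmin := minB_mem (a.fst_nonempty hc')
      obtain ⟨c'', hc'', hc''s, hmc''⟩ := mem_psiBlock_fst.1 (hc'sub hmin)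
      exact a.eq_of_mem_of_mem hc'' hc' hmc'' hmin ▸ hc''s
    · intro hm
      obtain ⟨c', hc', rfl⟩ := a.mem_mins.1 (ρ.fst_subset hs hm)
      exact ⟨c', hc', fun x hx => mem_psiBlock_fst.2 ⟨c', hc', hm, hx⟩, rfl⟩
  · rw [phiBlock_snd hc (psiBlock_snd hc hcs ▸ a.snd_mem hc), hcs]

lemma injOn_psiBlock : Set.InjOn a.psiBlock ρ.1 := by
  intro s hs s' hs' heq
  rw [← phiBlock_psiBlock ρ hs, ← phiBlock_psiBlock ρ hs', heq]

end PPart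

namespace IsCoarsening

open PPart

variable {A : Finset ℕ} {a π : PPart A} (h : IsCoarsening a π)
include h

lemma minB_phiBlock {b : Finset ℕ × ℕ} (hb : b ∈ π.1) :
    minB (a.phiBlock b).1 = minB b.1 := by
  have hmin := minB_mem (π.fst_nonempty hb)
  obtain ⟨c, hc, hmc⟩ := a.exists_mem_fst (π.fst_subset hb hmin)
  have hcb := h.subset_of_mem hc hb hmc hmin
  refine minB_eq_of_forall_le (mem_phiBlock_fst.2 ⟨c, hc, hcb, ?_⟩) ?_
  · exact le_antisymm (minB_le hmc) (minB_le (hcb (minB_mem (a.fst_nonempty hc))))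
  · intro m hm
    obtain ⟨c', hc', hc'b, rfl⟩ := mem_phiBlock_fst.1 hm
    exact minB_le (hc'b (minB_mem (a.fst_nonempty hc')))

lemma phiBlock_union_fst {b₁ b₂ : Finset ℕ × ℕ} (hb₁ : b₁ ∈ π.1) (hb₂ : b₂ ∈ π.1)
    (x : ℕ) : (a.phiBlock (b₁.1 ∪ b₂.1, x)).1 = (a.phiBlock b₁).1 ∪ (a.phiBlock b₂).1 := by
  ext m
  simp only [mem_union, mem_phiBlock_fst]
  constructor
  · rintro ⟨c, hc, hcb, rfl⟩
    rcases mem_union.1 (hcb (a.snd_mem hc)) with h₁ | h₂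
    exacts [Or.inl ⟨c, hc, h.subset_of_mem hc hb₁ (a.snd_mem hc) h₁, rfl⟩,
      Or.inr ⟨c, hc, h.subset_of_mem hc hb₂ (a.snd_mem hc) h₂, rfl⟩]
  · rintro (⟨c, hc, hcb, rfl⟩ | ⟨c, hc, hcb, rfl⟩)
    exacts [⟨c, hc, hcb.trans subset_union_left, rfl⟩, ⟨c, hc, hcb.trans subset_union_right, rfl⟩]

lemma psiBlock_phiBlock {b : Finset ℕ × ℕ} (hb : b ∈ π.1) :
    a.psiBlock (a.phiBlock b) = b := by
  obtain ⟨c, hc, hcb, hpt⟩ := h.2 b hb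
  refine Prod.ext (ext fun x => ?_) ?_
  · rw [mem_psiBlock_fst]
    constructor
    · rintro ⟨c', hc', hc'm, hxc'⟩
      obtain ⟨c'', hc'', hc''b, hmin⟩ := mem_phiBlock_fst.1 hc'm
      exact hc''b (a.eq_of_minB_eq hc'' hc' hmin ▸ hxc')
    · intro hx
      obtain ⟨c', hc', hxc'⟩ := a.exists_mem_fst (π.fst_subset hb hx)
      exact ⟨c', hc', mem_phiBlock_fst.2 ⟨c', hc', h.subset_of_mem hc' hb hxc' hx, rfl⟩, hxc'⟩
  · rw [psiBlock_snd hc (phiBlock_snd hc (hpt ▸ a.snd_mem hc)).symm, hpt]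

lemma injOn_phiBlock : Set.InjOn a.phiBlock π.1 := by
  intro b hb b' hb' heq
  rw [← h.psiBlock_phiBlock hb, ← h.psiBlock_phiBlock hb', heq]

end IsCoarsening

section Phi

open PPart

variable {A : Finset ℕ} (a : PPart A)

/-- The map `Φ` on the upper filter of `a`. -/
noncomputable def phiPart {π : PPart A} (h : IsCoarsening a π) : PPart a.mins := by
  refine ⟨π.1.image a.phiBlock, ?_, ?_, ?_⟩
  · simp only [mem_image]
    rintro _ ⟨b, hb, rfl⟩
    obtain ⟨c, hc, hcb, hpt⟩ := h.2 b hb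
    rw [phiBlock_snd hc (hpt ▸ a.snd_mem hc)]
    exact mem_phiBlock_fst.2 ⟨c, hc, hcb, rfl⟩
  · simp only [mem_image]
    rintro _ ⟨b, hb, rfl⟩ _ ⟨b', hb', rfl⟩ hne
    refine disjoint_left.2 fun m hm hm' => hne ?_
    obtain ⟨c, hc, hcb, rfl⟩ := mem_phiBlock_fst.1 hm
    obtain ⟨c', hc', hc'b', hmin⟩ := mem_phiBlock_fst.1 hm'
    obtain rfl := a.eq_of_minB_eq hc' hc hmin
    rw [π.eq_of_mem_of_mem hb hb' (hcb (a.snd_mem hc)) (hc'b' (a.snd_mem hc))]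
  · ext m
    simp only [mem_biUnion, mem_image]
    constructor
    · rintro ⟨_, ⟨b, -, rfl⟩, hm⟩
      obtain ⟨c, hc, -, rfl⟩ := mem_phiBlock_fst.1 hm
      exact ⟨c, hc, rfl⟩
    · rintro ⟨c, hc, rfl⟩
      obtain ⟨b, hb, hcb⟩ := h.1 c hc
      exact ⟨_, ⟨b, hb, rfl⟩, mem_phiBlock_fst.2 ⟨c, hc, hcb, rfl⟩⟩

/-- The inverse of `Φ`. -/
noncomputable def psiPart (ρ : PPart a.mins) : PPart A := by
  refine ⟨ρ.1.image a.psiBlock, ?_, ?_, ?_⟩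
  · simp only [mem_image]
    rintro _ ⟨s, hs, rfl⟩
    obtain ⟨c, hc, hcs⟩ := a.mem_mins.1 (ρ.fst_subset hs (ρ.snd_mem hs))
    rw [psiBlock_snd hc hcs]
    exact mem_psiBlock_fst.2 ⟨c, hc, hcs ▸ ρ.snd_mem hs, a.snd_mem hc⟩
  · simp only [mem_image]
    rintro _ ⟨s, hs, rfl⟩ _ ⟨s', hs', rfl⟩ hne
    refine disjoint_left.2 fun x hx hx' => hne ?_
    obtain ⟨c, hc, hcs, hxc⟩ := mem_psiBlock_fst.1 hx
    obtain ⟨c', hc', hc's', hxc'⟩ := mem_psiBlock_fst.1 hx'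
    obtain rfl := a.eq_of_mem_of_mem hc hc' hxc hxc'
    rw [ρ.eq_of_mem_of_mem hs hs' hcs hc's']
  · ext x
    simp only [mem_biUnion, mem_image]
    constructor
    · rintro ⟨_, ⟨s, -, rfl⟩, hx⟩
      obtain ⟨c, hc, -, hxc⟩ := mem_psiBlock_fst.1 hx
      exact a.fst_subset hc hxc
    · intro hx
      obtain ⟨c, hc, hxc⟩ := a.exists_mem_fst hx
      obtain ⟨s, hs, hcs⟩ := ρ.exists_mem_fst (a.mem_mins.2 ⟨c, hc, rfl⟩)
      exact ⟨_, ⟨s, hs, rfl⟩, mem_psiBlock_fst.2 ⟨c, hc, hcs, hxc⟩⟩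

lemma isCoarsening_psiPart (ρ : PPart a.mins) : IsCoarsening a (psiPart a ρ) := by
  constructor
  · intro c hc
    obtain ⟨s, hs, hcs⟩ := ρ.exists_mem_fst (a.mem_mins.2 ⟨c, hc, rfl⟩)
    exact ⟨_, mem_image_of_mem _ hs, fun x hx => mem_psiBlock_fst.2 ⟨c, hc, hcs, hx⟩⟩
  · intro _ hb
    obtain ⟨s, hs, rfl⟩ := mem_image.1 hb
    obtain ⟨c, hc, hcs⟩ := a.mem_mins.1 (ρ.fst_subset hs (ρ.snd_mem hs))
    refine ⟨c, hc, fun x hx => mem_psiBlock_fst.2 ⟨c, hc, hcs ▸ ρ.snd_mem hs, hx⟩, ?_⟩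
    exact psiBlock_snd hc hcs

lemma psiPart_phiPart {π : PPart A} (h : IsCoarsening a π) : psiPart a (phiPart a h) = π := by
  refine Subtype.ext ((image_image ..).trans ?_)
  exact (image_congr fun b hb => h.psiBlock_phiBlock hb).trans image_id

lemma phiPart_psiPart (ρ : PPart a.mins) : phiPart a (isCoarsening_psiPart a ρ) = ρ := by
  refine Subtype.ext ((image_image ..).trans ?_)
  exact (image_congr fun s hs => phiBlock_psiBlock ρ hs).trans image_id

variable {a}

lemma covPP_phiPart {π π' : PPart A} (h : IsCoarsening a π) (hcov : covPP π π') :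
    covPP (phiPart a h) (phiPart a (h.trans_covPP hcov)) ∧
      labPP (phiPart a h) (phiPart a (h.trans_covPP hcov)) = labPP π π' :=
  covPP_image a.phiBlock rfl rfl h.injOn_phiBlock (fun _ => h.minB_phiBlock)
    (fun _ hb₁ _ hb₂ => h.phiBlock_union_fst hb₁ hb₂) (fun _ _ _ => rfl) hcov

lemma covPP_psiPart {ρ ρ' : PPart a.mins} (hcov : covPP ρ ρ') :
    covPP (psiPart a ρ) (psiPart a ρ') :=
  (covPP_image a.psiBlock rfl rfl (injOn_psiBlock ρ) (fun _ => minB_psiBlock ρ)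
    (fun b₁ _ b₂ _ => psiBlock_union_fst b₁ b₂) (fun _ _ _ => rfl) hcov).1

lemma leOf_phiPart {π π' : PPart A} (h : IsCoarsening a π) (hle : leOf covPP π π') :
    leOf covPP (phiPart a h) (phiPart a (h.trans_leOf hle)) := by
  induction hle with
  | refl => exact Relation.ReflTransGen.refl
  | tail hle hcov ih => exact ih.tail (covPP_phiPart (h.trans_leOf hle) hcov).1

lemma leOf_psiPart {ρ ρ' : PPart a.mins} (hle : leOf covPP ρ ρ') :
    leOf covPP (psiPart a ρ) (psiPart a ρ') :=
  Relation.ReflTransGen.lift (psiPart a) (fun _ _ => covPP_psiPart) _ _ hle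

end Phi

noncomputable def upperFilterEquiv {A : Finset ℕ} (a : PPart A) :
    {π : PPart A // leOf covPP a π} ≃ PPart a.mins where
  toFun π := phiPart a (IsCoarsening.of_leOf π.2)
  invFun ρ := ⟨psiPart a ρ, leOf_of_isCoarsening (isCoarsening_psiPart a ρ)⟩
  left_inv _ := Subtype.ext (psiPart_phiPart a _)
  right_inv := phiPart_psiPart a

/-- For `α ∈ Πₙ•`, the map `Φ` is a poset isomorphism from the principal
upper filter `U(α)` onto the pointed partition poset on the set of minima of the blocks of
`α`, and it preserves the labeling `λ•` on cover relations. -/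
theorem upper_filter_iso_pointed (n : ℕ) (a : PPart (Finset.Icc 1 n)) :
    ∃ e : {π : PPart (Finset.Icc 1 n) // leOf covPP a π} ≃
        PPart (a.1.image fun b => minB b.1),
      (∀ π, (e π).1 = PhiMap a.1 π.1.1) ∧
      (∀ π π', leOf covPP π.1 π'.1 ↔ leOf covPP (e π) (e π')) ∧
      (∀ π π', covPP π.1 π'.1 →
        covPP (e π) (e π') ∧ labPP (e π) (e π') = labPP π.1 π'.1) := by
  refine ⟨upperFilterEquiv a, fun _ => rfl, fun π π' => ⟨fun h => ?_, fun h => ?_⟩,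
    fun π π' h => covPP_phiPart (.of_leOf π.2) h⟩
  · exact leOf_phiPart (.of_leOf π.2) h
  · have h' := leOf_psiPart h
    rwa [upperFilterEquiv, Equiv.coe_fn_mk, psiPart_phiPart, psiPart_phiPart] at h'
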